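/- arXiv:1912.13225 — 5 statements merged into one kernel-verified Lean document; each statement's English description precedes it below -/
import Mathlib

section
/- (Fictitious Space Lemma) Let H and H_D be finite-dimensional real inner product spaces, A : H → H and B : H_D → H_D self-adjoint positive definite linear operators, and R : H_D → H a linear operator such that: (i) R is surjective; (ii) there is c_R > 0 with ⟨A(R u_D), R u_D⟩ ≤ c_R ⟨B u_D, u_D⟩ for all u_D ∈ H_D; (iii) there is c_T > 0 such that for every u ∈ H there exists u_D ∈ H_D with R u_D = u and c_T ⟨B u_D, u_D⟩ ≤ ⟨A u, u⟩. Let R* : H → H_D denote the adjoint of R. Then for all u ∈ H, c_T ⟨A u, u⟩ ≤ ⟨A (R B⁻¹ R* A u), u⟩ ≤ c_R ⟨A u, u⟩; in particular all eigenvalues of R B⁻¹ R* A lie in the interval [c_T, c_R]. -/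
/-!
With `w := B⁻¹ R* A u` one has `⟨A (R w), u⟩ = ⟨B w, w⟩` and `⟨B w, x⟩ = ⟨A u, R x⟩` for every
`x`. Both bounds are then Cauchy–Schwarz for a positive operator: for `B` against a stable
decomposition `u = R u_D` (lower bound), and for `A` against `R w` combined with the continuity
estimate at `w` (upper bound). An eigenvector `u` turns the two bounds into bounds on the
eigenvalue, since `⟨A u, u⟩ > 0`.
-/

open RealInnerProductSpace

namespace LinearMap

variable {E : Type*} [NormedAddCommGroup E] [InnerProductSpace ℝ E] {T : E →ₗ[ℝ] E}

theorem isPositive_of_inner_map_self_pos (hT : T.IsSymmetric)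
    (hpos : ∀ x, x ≠ 0 → 0 < ⟪T x, x⟫) : T.IsPositive := by
  refine (T.isPositive_iff).2 ⟨hT, fun x => ?_⟩
  rcases eq_or_ne x 0 with rfl | hx
  · simp
  · exact (hpos x hx).le

theorem IsPositive.inner_map_sq_le (hT : T.IsPositive) (x y : E) :
    ⟪T x, y⟫ ^ 2 ≤ ⟪T x, x⟫ * ⟪T y, y⟫ := by
  have hquad : ∀ t : ℝ, 0 ≤ ⟪T y, y⟫ * (t * t) + 2 * ⟪T x, y⟫ * t + ⟪T x, x⟫ := by
    intro t
    have h := hT.inner_nonneg_left (x + t • y)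
    have hyx : ⟪T y, x⟫ = ⟪T x, y⟫ := by rw [hT.isSymmetric y x, real_inner_comm]
    simp only [map_add, map_smul, inner_add_left, inner_add_right, real_inner_smul_left,
      real_inner_smul_right, hyx] at h
    linarith
  have hdisc := discrim_le_zero hquad
  rw [discrim] at hdisc
  linarith

theorem IsPositive.mul_inner_le_of_mul_le_inner (hT : T.IsPositive) {c : ℝ} (hc : 0 ≤ c)
    {x y : E} (h : c * ⟪T x, x⟫ ≤ ⟪T x, y⟫) : c * ⟪T x, y⟫ ≤ ⟪T y, y⟫ := by
  have hcs := hT.inner_map_sq_le x y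
  have hy := hT.inner_nonneg_left y
  rcases le_or_gt ⟪T x, y⟫ 0 with hxy | hxy
  · nlinarith
  · nlinarith [mul_le_mul_of_nonneg_left h (mul_nonneg hc hy)]

theorem IsPositive.inner_le_mul_of_le_mul_inner (hT : T.IsPositive) {c : ℝ} (hc : 0 ≤ c)
    {x y : E} (h : ⟪T y, y⟫ ≤ c * ⟪T x, y⟫) : ⟪T x, y⟫ ≤ c * ⟪T x, x⟫ := by
  have hcs := hT.inner_map_sq_le x y
  have hx := hT.inner_nonneg_left x
  rcases le_or_gt ⟪T x, y⟫ 0 with hxy | hxy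
  · nlinarith
  · nlinarith [mul_le_mul_of_nonneg_left h hx]

end LinearMap

section FictitiousSpace

open LinearMap

variable {H HD : Type*}
  [NormedAddCommGroup H] [InnerProductSpace ℝ H] [FiniteDimensional ℝ H]
  [NormedAddCommGroup HD] [InnerProductSpace ℝ HD] [FiniteDimensional ℝ HD]
  {A : H →ₗ[ℝ] H} {B : HD →ₗ[ℝ] HD} {R : HD →ₗ[ℝ] H} {u : H} {w : HD}

theorem inner_eq_inner_of_eq_adjoint (hw : B w = adjoint R (A u)) (x : HD) :
    ⟪B w, x⟫ = ⟪A u, R x⟫ := by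
  rw [hw, adjoint_inner_left]

theorem inner_map_map_eq_of_eq_adjoint (hA : A.IsSymmetric) (hw : B w = adjoint R (A u)) :
    ⟪A (R w), u⟫ = ⟪B w, w⟫ := by
  rw [hA, real_inner_comm, inner_eq_inner_of_eq_adjoint hw]

theorem mul_inner_le_of_stable_decomposition (hB : B.IsPositive) {cT : ℝ} (hcT : 0 ≤ cT)
    (hw : B w = adjoint R (A u)) {uD : HD} (hRuD : R uD = u)
    (hstable : cT * ⟪B uD, uD⟫ ≤ ⟪A u, u⟫) : cT * ⟪A u, u⟫ ≤ ⟪B w, w⟫ := by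
  have hBw : ⟪B uD, w⟫ = ⟪A u, u⟫ := by
    rw [hB.isSymmetric, real_inner_comm, inner_eq_inner_of_eq_adjoint hw, hRuD]
  rw [← hBw] at hstable ⊢
  exact hB.mul_inner_le_of_mul_le_inner hcT hstable

theorem inner_le_mul_of_continuity (hA : A.IsPositive) {cR : ℝ} (hcR : 0 ≤ cR)
    (hw : B w = adjoint R (A u)) (hcont : ⟪A (R w), R w⟫ ≤ cR * ⟪B w, w⟫) :
    ⟪B w, w⟫ ≤ cR * ⟪A u, u⟫ := by
  rw [inner_eq_inner_of_eq_adjoint hw] at hcont ⊢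
  exact hA.inner_le_mul_of_le_mul_inner hcR hcont

end FictitiousSpace

theorem stmt2_general {H HD : Type*}
    [NormedAddCommGroup H] [InnerProductSpace ℝ H] [FiniteDimensional ℝ H]
    [NormedAddCommGroup HD] [InnerProductSpace ℝ HD] [FiniteDimensional ℝ HD]
    (A : H →ₗ[ℝ] H) (B Binv : HD →ₗ[ℝ] HD)
    (hAsym : ∀ x y : H, ⟪A x, y⟫ = ⟪x, A y⟫)
    (hApos : ∀ x : H, x ≠ 0 → 0 < ⟪A x, x⟫)
    (hBsym : ∀ x y : HD, ⟪B x, y⟫ = ⟪x, B y⟫)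
    (hBpos : ∀ x : HD, x ≠ 0 → 0 < ⟪B x, x⟫)
    (hBinv₂ : ∀ x : HD, B (Binv x) = x)
    (R : HD →ₗ[ℝ] H)
    (cR cT : ℝ) (hcR : 0 < cR) (hcT : 0 < cT)
    (hcont : ∀ uD : HD, ⟪A (R uD), R uD⟫ ≤ cR * ⟪B uD, uD⟫)
    (hstable : ∀ u : H, ∃ uD : HD, R uD = u ∧ cT * ⟪B uD, uD⟫ ≤ ⟪A u, u⟫) :
    (∀ u : H,
        cT * ⟪A u, u⟫ ≤ ⟪A (R (Binv (LinearMap.adjoint R (A u)))), u⟫ ∧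
        ⟪A (R (Binv (LinearMap.adjoint R (A u)))), u⟫ ≤ cR * ⟪A u, u⟫) ∧
    (∀ (lam : ℝ) (u : H), u ≠ 0 →
        R (Binv (LinearMap.adjoint R (A u))) = lam • u → cT ≤ lam ∧ lam ≤ cR) := by
  have hA := LinearMap.isPositive_of_inner_map_self_pos hAsym hApos
  have hB := LinearMap.isPositive_of_inner_map_self_pos hBsym hBpos
  have bounds : ∀ u : H,
      cT * ⟪A u, u⟫ ≤ ⟪A (R (Binv (LinearMap.adjoint R (A u)))), u⟫ ∧
      ⟪A (R (Binv (LinearMap.adjoint R (A u)))), u⟫ ≤ cR * ⟪A u, u⟫ := by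
    intro u
    have hw := hBinv₂ (LinearMap.adjoint R (A u))
    obtain ⟨uD, hRuD, huD⟩ := hstable u
    rw [inner_map_map_eq_of_eq_adjoint hAsym hw]
    exact ⟨mul_inner_le_of_stable_decomposition hB hcT.le hw hRuD huD,
      inner_le_mul_of_continuity hA hcR.le hw (hcont _)⟩
  refine ⟨bounds, fun lam u hu heig => ?_⟩
  have h := bounds u
  rw [heig, map_smul, real_inner_smul_left] at h
  exact ⟨le_of_mul_le_mul_right h.1 (hApos u hu), le_of_mul_le_mul_right h.2 (hApos u hu)⟩

/-- Fictitious Space Lemma: Let `H`, `H_D` be finite-dimensional real inner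
product spaces, `A : H → H` and `B : H_D → H_D` self-adjoint positive definite linear
operators (with `Binv` the inverse of `B`), and `R : H_D → H` a surjective linear operator
satisfying the continuity estimate with constant `c_R` and the stable decomposition property
with constant `c_T`. Then for all `u`,
`c_T ⟨A u, u⟩ ≤ ⟨A (R B⁻¹ R* A u), u⟩ ≤ c_R ⟨A u, u⟩`, and in particular every eigenvalue
of `R B⁻¹ R* A` lies in `[c_T, c_R]`. -/
theorem stmt2 {H HD : Type*}
    [NormedAddCommGroup H] [InnerProductSpace ℝ H] [FiniteDimensional ℝ H]
    [NormedAddCommGroup HD] [InnerProductSpace ℝ HD] [FiniteDimensional ℝ HD]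
    (A : H →ₗ[ℝ] H) (B Binv : HD →ₗ[ℝ] HD)
    (hAsym : ∀ x y : H, ⟪A x, y⟫ = ⟪x, A y⟫)
    (hApos : ∀ x : H, x ≠ 0 → 0 < ⟪A x, x⟫)
    (hBsym : ∀ x y : HD, ⟪B x, y⟫ = ⟪x, B y⟫)
    (hBpos : ∀ x : HD, x ≠ 0 → 0 < ⟪B x, x⟫)
    (hBinv₁ : ∀ x : HD, Binv (B x) = x) (hBinv₂ : ∀ x : HD, B (Binv x) = x)
    (R : HD →ₗ[ℝ] H) (hRsurj : Function.Surjective R)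
    (cR cT : ℝ) (hcR : 0 < cR) (hcT : 0 < cT)
    (hcont : ∀ uD : HD, ⟪A (R uD), R uD⟫ ≤ cR * ⟪B uD, uD⟫)
    (hstable : ∀ u : H, ∃ uD : HD, R uD = u ∧ cT * ⟪B uD, uD⟫ ≤ ⟪A u, u⟫) :
    (∀ u : H,
        cT * ⟪A u, u⟫ ≤ ⟪A (R (Binv (LinearMap.adjoint R (A u)))), u⟫ ∧
        ⟪A (R (Binv (LinearMap.adjoint R (A u)))), u⟫ ≤ cR * ⟪A u, u⟫) ∧
    (∀ (lam : ℝ) (u : H), u ≠ 0 →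
        R (Binv (LinearMap.adjoint R (A u))) = lam • u → cT ≤ lam ∧ lam ≤ cR) :=
  stmt2_general A B Binv hAsym hApos hBsym hBpos hBinv₂ R cR cT hcR hcT hcont hstable
end

section
/- (Continuity estimate for the GenEO preconditioner with inexact coarse solve) Assume: ‖∑_{i=1}^N R_iᵀ U_i‖_A² ≤ k₀ ∑_{i=1}^N ‖R_iᵀ U_i‖_A² for all U_i ∈ ℝ^{n_i}; and ⟨E u, u⟩ ≤ μ ⟨Ẽ u, u⟩ for all u ∈ ℝᵐ for some μ > 0. Let ε_A := ‖P₀ − P̃₀‖_A and c_R := [ k₀ (1 + ε_A²) + μ + √( (k₀ (1 + ε_A²) − μ)² + 4 μ k₀ ε_A² ) ] / 2. Then for all U₀ ∈ ℝᵐ and all U_i ∈ ℝ^{n_i} (i = 1,…,N): ‖Z U₀ + (I − P̃₀) ∑_{i=1}^N R_iᵀ U_i‖_A² ≤ c_R ( ⟨Ẽ U₀, U₀⟩ + ∑_{i=1}^N ⟨R_i A R_iᵀ U_i, U_i⟩ ). -/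
/-!
Put `w = ∑ R_iᵀ U_i`. The vector `Z U₀ + (I - P̃₀) w` splits as `(Z U₀ + (P₀ - P̃₀) w) + (I - P₀) w`,
the first summand in `V₀` and the second `A`-orthogonal to `V₀`, so its squared `A`-norm is at most
`(‖Z U₀‖_A + ε_A ‖w‖_A)² + ‖w‖_A²`. Writing `‖Z U₀‖_A = √μ y` and `‖w‖_A = √k₀ x`, the hypotheses
give `y² ≤ ⟨Ẽ U₀, U₀⟩` and `x² ≤ ∑ ⟨R_i A R_iᵀ U_i, U_i⟩`, and the bound becomes the quadratic form of
`[[k₀ (1 + ε_A²), ε_A √(μ k₀)], [ε_A √(μ k₀), μ]]` at `(x, y)`; `c_R` is its larger eigenvalue.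
-/

open Matrix

/-- The norm induced by an SPD matrix `A`: `‖x‖_A = √(⟨A x, x⟩)`. -/
noncomputable def aNorm {n : ℕ} (A : Matrix (Fin n) (Fin n) ℝ) (x : Fin n → ℝ) : ℝ :=
  Real.sqrt ((A *ᵥ x) ⬝ᵥ x)

/-- The operator norm of a matrix `M` induced by the `A`-norm. -/
noncomputable def aOpNorm {n : ℕ} (A M : Matrix (Fin n) (Fin n) ℝ) : ℝ :=
  sSup { t : ℝ | ∃ x : Fin n → ℝ, x ≠ 0 ∧ t = aNorm A (M *ᵥ x) / aNorm A x }

namespace Matrix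

variable {n k : ℕ} {A : Matrix (Fin n) (Fin n) ℝ}

lemma IsSymm.mulVec_dotProduct_comm (hA : A.IsSymm) (x y : Fin n → ℝ) :
    (A *ᵥ x) ⬝ᵥ y = (A *ᵥ y) ⬝ᵥ x := by
  rw [dotProduct_comm, dotProduct_mulVec, ← mulVec_transpose, hA.eq]

lemma transpose_mul_mul_mulVec_dotProduct (A : Matrix (Fin n) (Fin n) ℝ)
    (B : Matrix (Fin n) (Fin k) ℝ) (v : Fin k → ℝ) :
    ((Bᵀ * A * B) *ᵥ v) ⬝ᵥ v = (A *ᵥ (B *ᵥ v)) ⬝ᵥ (B *ᵥ v) := by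
  rw [← mulVec_mulVec, ← mulVec_mulVec, mulVec_transpose, ← dotProduct_mulVec,
    dotProduct_comm]

lemma mul_mul_transpose_mulVec_dotProduct (A : Matrix (Fin n) (Fin n) ℝ)
    (B : Matrix (Fin k) (Fin n) ℝ) (v : Fin k → ℝ) :
    ((B * A * Bᵀ) *ᵥ v) ⬝ᵥ v = (A *ᵥ (Bᵀ *ᵥ v)) ⬝ᵥ (Bᵀ *ᵥ v) := by
  simpa only [transpose_transpose] using transpose_mul_mul_mulVec_dotProduct A Bᵀ v

lemma PosSemidef.isSymm (hA : A.PosSemidef) : A.IsSymm :=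
  isHermitian_iff_isSymm.mp hA.isHermitian

lemma PosSemidef.mulVec_dotProduct_self_nonneg (hA : A.PosSemidef) (x : Fin n → ℝ) :
    0 ≤ (A *ᵥ x) ⬝ᵥ x := by
  simpa [dotProduct_comm] using hA.dotProduct_mulVec_nonneg x

end Matrix

open Matrix

section ANorm

variable {n : ℕ} {A : Matrix (Fin n) (Fin n) ℝ}

lemma aNorm_nonneg (x : Fin n → ℝ) : 0 ≤ aNorm A x := Real.sqrt_nonneg _

@[simp]
lemma aNorm_zero : aNorm A 0 = 0 := by simp [aNorm]

lemma sq_aNorm (hA : A.PosSemidef) (x : Fin n → ℝ) : aNorm A x ^ 2 = (A *ᵥ x) ⬝ᵥ x :=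
  Real.sq_sqrt (hA.mulVec_dotProduct_self_nonneg x)

lemma aNorm_pos (hA : A.PosDef) {x : Fin n → ℝ} (hx : x ≠ 0) : 0 < aNorm A x :=
  Real.sqrt_pos.mpr (by simpa [dotProduct_comm] using hA.dotProduct_mulVec_pos hx)

lemma aNorm_smul (c : ℝ) (x : Fin n → ℝ) : aNorm A (c • x) = |c| * aNorm A x := by
  rw [aNorm, aNorm, mulVec_smul, smul_dotProduct, dotProduct_smul, smul_eq_mul, smul_eq_mul,
    ← mul_assoc, ← sq, Real.sqrt_mul (sq_nonneg c), Real.sqrt_sq_eq_abs]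

lemma continuous_aNorm : Continuous (aNorm A) := by
  unfold aNorm
  fun_prop

lemma sq_aNorm_add (hA : A.PosSemidef) (x y : Fin n → ℝ) :
    aNorm A (x + y) ^ 2 = aNorm A x ^ 2 + 2 * ((A *ᵥ x) ⬝ᵥ y) + aNorm A y ^ 2 := by
  have hsymm := hA.isSymm.mulVec_dotProduct_comm y x
  simp only [sq_aNorm hA, mulVec_add, dotProduct_add, add_dotProduct]
  linarith

lemma sq_aNorm_add_of_orthogonal (hA : A.PosSemidef) {x y : Fin n → ℝ}
    (hxy : (A *ᵥ x) ⬝ᵥ y = 0) : aNorm A (x + y) ^ 2 = aNorm A x ^ 2 + aNorm A y ^ 2 := by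
  rw [sq_aNorm_add hA, hxy, mul_zero, add_zero]

lemma mulVec_dotProduct_le_aNorm_mul_aNorm (hA : A.PosSemidef) (x y : Fin n → ℝ) :
    (A *ᵥ x) ⬝ᵥ y ≤ aNorm A x * aNorm A y := by
  have hquad : ∀ s : ℝ,
      0 ≤ aNorm A y ^ 2 * (s * s) + 2 * ((A *ᵥ x) ⬝ᵥ y) * s + aNorm A x ^ 2 := by
    intro s
    have hsq := sq_aNorm_add hA x (s • y)
    rw [aNorm_smul, dotProduct_smul, smul_eq_mul, mul_pow, sq_abs] at hsq
    nlinarith [sq_nonneg (aNorm A (x + s • y))]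
  have hdisc := discrim_le_zero hquad
  rw [discrim] at hdisc
  refine le_of_sq_le_sq ?_ (mul_nonneg (aNorm_nonneg x) (aNorm_nonneg y))
  nlinarith

lemma aNorm_add_le (hA : A.PosSemidef) (x y : Fin n → ℝ) :
    aNorm A (x + y) ≤ aNorm A x + aNorm A y := by
  refine le_of_sq_le_sq ?_ (add_nonneg (aNorm_nonneg x) (aNorm_nonneg y))
  rw [sq_aNorm_add hA]
  nlinarith [mulVec_dotProduct_le_aNorm_mul_aNorm hA x y]

lemma bddAbove_aNorm_ratio (hA : A.PosDef) (M : Matrix (Fin n) (Fin n) ℝ) :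
    BddAbove {t : ℝ | ∃ x : Fin n → ℝ, x ≠ 0 ∧ t = aNorm A (M *ᵥ x) / aNorm A x} := by
  set ratio : (Fin n → ℝ) → ℝ := fun x => aNorm A (M *ᵥ x) / aNorm A x
  have hcont : ContinuousOn ratio (Metric.sphere 0 1) :=
    (continuous_aNorm.comp (continuous_const.matrix_mulVec continuous_id)).continuousOn.div
      continuous_aNorm.continuousOn fun x hx =>
        (aNorm_pos hA (ne_zero_of_mem_unit_sphere ⟨x, hx⟩)).ne'
  obtain ⟨C, hC⟩ := (isCompact_sphere (0 : Fin n → ℝ) 1).bddAbove_image hcont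
  refine ⟨C, ?_⟩
  rintro _ ⟨x, hx, rfl⟩
  have hscale : ratio (‖x‖⁻¹ • x) = ratio x := by
    have : ‖x‖⁻¹ ≠ 0 := inv_ne_zero (norm_ne_zero_iff.mpr hx)
    simp only [ratio, mulVec_smul, aNorm_smul]
    field_simp
  change ratio x ≤ C
  rw [← hscale]
  exact hC ⟨_, by simpa using norm_smul_inv_norm (𝕜 := ℝ) hx, rfl⟩

lemma aNorm_mulVec_le (hA : A.PosDef) (M : Matrix (Fin n) (Fin n) ℝ) (x : Fin n → ℝ) :
    aNorm A (M *ᵥ x) ≤ aOpNorm A M * aNorm A x := by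
  rcases eq_or_ne x 0 with rfl | hx
  · simp
  rw [← div_le_iff₀ (aNorm_pos hA hx)]
  exact le_csSup (bddAbove_aNorm_ratio hA M) ⟨x, hx, rfl⟩

end ANorm

section CoarseProjection

variable {n m : ℕ} {A : Matrix (Fin n) (Fin n) ℝ} {Z : Matrix (Fin n) (Fin m) ℝ}

lemma Matrix.PosDef.transpose_mul_mul_of_linearIndependent (hA : A.PosDef)
    (hZ : LinearIndependent ℝ Zᵀ) : (Zᵀ * A * Z).PosDef := by
  simpa using hA.conjTranspose_mul_mul_same (mulVec_injective_iff.mpr hZ)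

lemma transpose_mul_mul_one_sub_proj (hE : IsUnit (Zᵀ * A * Z).det) :
    Zᵀ * A * (1 - Z * (Zᵀ * A * Z)⁻¹ * Zᵀ * A) = 0 := by
  rw [Matrix.mul_sub, Matrix.mul_one, sub_eq_zero]
  calc Zᵀ * A = (Zᵀ * A * Z) * (Zᵀ * A * Z)⁻¹ * (Zᵀ * A) := by
        rw [mul_nonsing_inv _ hE, Matrix.one_mul]
    _ = Zᵀ * A * (Z * (Zᵀ * A * Z)⁻¹ * Zᵀ * A) := by simp only [Matrix.mul_assoc]

lemma mulVec_dotProduct_one_sub_proj_mulVec (hA : A.IsSymm) (hE : IsUnit (Zᵀ * A * Z).det)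
    (v : Fin m → ℝ) (w : Fin n → ℝ) :
    (A *ᵥ (Z *ᵥ v)) ⬝ᵥ ((1 - Z * (Zᵀ * A * Z)⁻¹ * Zᵀ * A) *ᵥ w) = 0 := by
  rw [hA.mulVec_dotProduct_comm, dotProduct_mulVec, ← mulVec_transpose, mulVec_mulVec,
    mulVec_mulVec, transpose_mul_mul_one_sub_proj hE, zero_mulVec, zero_dotProduct]

lemma aNorm_one_sub_proj_mulVec_le (hA : A.PosSemidef) (hE : IsUnit (Zᵀ * A * Z).det)
    (w : Fin n → ℝ) : aNorm A ((1 - Z * (Zᵀ * A * Z)⁻¹ * Zᵀ * A) *ᵥ w) ≤ aNorm A w := by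
  have hw : w = Z *ᵥ (((Zᵀ * A * Z)⁻¹ * Zᵀ * A) *ᵥ w)
      + (1 - Z * (Zᵀ * A * Z)⁻¹ * Zᵀ * A) *ᵥ w := by
    simp [sub_mulVec, mulVec_mulVec, Matrix.mul_assoc]
  have hpyth := sq_aNorm_add_of_orthogonal hA
    (mulVec_dotProduct_one_sub_proj_mulVec hA.isSymm hE
      (((Zᵀ * A * Z)⁻¹ * Zᵀ * A) *ᵥ w) w)
  rw [← hw] at hpyth
  exact le_of_sq_le_sq (hpyth ▸ le_add_of_nonneg_left (sq_nonneg _)) (aNorm_nonneg w)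

lemma sq_aNorm_add_one_sub_inexact_proj_le (hA : A.PosDef) (hZ : LinearIndependent ℝ Zᵀ)
    (B : Matrix (Fin m) (Fin m) ℝ) (u : Fin m → ℝ) (w : Fin n → ℝ) :
    aNorm A (Z *ᵥ u + (1 - Z * B * Zᵀ * A) *ᵥ w) ^ 2
      ≤ (aNorm A (Z *ᵥ u)
          + aOpNorm A (Z * (Zᵀ * A * Z)⁻¹ * Zᵀ * A - Z * B * Zᵀ * A) * aNorm A w) ^ 2
        + aNorm A w ^ 2 := by
  have hE : IsUnit (Zᵀ * A * Z).det :=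
    (hA.transpose_mul_mul_of_linearIndependent hZ).det_pos.ne'.isUnit
  set v := u + (((Zᵀ * A * Z)⁻¹ - B) * Zᵀ * A) *ᵥ w
  have hcoarse :
      Z *ᵥ v = Z *ᵥ u + (Z * (Zᵀ * A * Z)⁻¹ * Zᵀ * A - Z * B * Zᵀ * A) *ᵥ w := by
    simp only [v, mulVec_add, mulVec_mulVec, Matrix.mul_sub, Matrix.sub_mul, Matrix.mul_assoc]
  have hsplit : Z *ᵥ u + (1 - Z * B * Zᵀ * A) *ᵥ w
      = Z *ᵥ v + (1 - Z * (Zᵀ * A * Z)⁻¹ * Zᵀ * A) *ᵥ w := by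
    rw [hcoarse]
    simp only [sub_mulVec, one_mulVec]
    abel
  rw [hsplit, sq_aNorm_add_of_orthogonal hA.posSemidef
    (mulVec_dotProduct_one_sub_proj_mulVec hA.posSemidef.isSymm hE v w)]
  gcongr
  · exact aNorm_nonneg _
  · rw [hcoarse]
    exact (aNorm_add_le hA.posSemidef _ _).trans (by grw [aNorm_mulVec_le hA])
  · exact aNorm_nonneg _
  · exact aNorm_one_sub_proj_mulVec_le hA.posSemidef hE w

end CoarseProjection

lemma larger_root_spec {p r q l : ℝ} (hq : 0 ≤ q)
    (hl : l = (p + r + √((p - r) ^ 2 + 4 * q)) / 2) :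
    p ≤ l ∧ r ≤ l ∧ (l - p) * (l - r) = q := by
  have hsq : √((p - r) ^ 2 + 4 * q) ^ 2 = (p - r) ^ 2 + 4 * q := Real.sq_sqrt (by positivity)
  have habs : |p - r| ≤ √((p - r) ^ 2 + 4 * q) :=
    Real.abs_le_sqrt (by linarith)
  obtain ⟨h₁, h₂⟩ := abs_le.mp habs
  refine ⟨by linarith, by linarith, ?_⟩
  rw [hl]
  linear_combination hsq / 4

lemma quadratic_form_le_of_sub_mul_sub_eq_sq {p r c l : ℝ} (hp : p ≤ l) (hr : r ≤ l)
    (hc : (l - p) * (l - r) = c ^ 2) (x y : ℝ) :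
    p * x ^ 2 + 2 * c * x * y + r * y ^ 2 ≤ l * (x ^ 2 + y ^ 2) := by
  rcases hp.lt_or_eq with hp | rfl
  · have hsos : (l - p) * ((l - p) * x ^ 2 - 2 * c * x * y + (l - r) * y ^ 2)
        = ((l - p) * x - c * y) ^ 2 := by linear_combination y ^ 2 * hc
    nlinarith [sq_nonneg ((l - p) * x - c * y)]
  · have hc0 : c = 0 := by simpa using hc.symm
    subst hc0
    nlinarith [sq_nonneg y]

lemma sq_add_mul_add_sq_le {k μ ε a b t S l : ℝ} (hk : 0 < k) (hμ : 0 < μ)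
    (ha : a ^ 2 ≤ μ * t) (hb : b ^ 2 ≤ k * S)
    (hl : l = (k * (1 + ε ^ 2) + μ + √((k * (1 + ε ^ 2) - μ) ^ 2 + 4 * μ * k * ε ^ 2)) / 2) :
    (a + ε * b) ^ 2 + b ^ 2 ≤ l * (t + S) := by
  have hsk : √k ^ 2 = k := Real.sq_sqrt hk.le
  have hsμ : √μ ^ 2 = μ := Real.sq_sqrt hμ.le
  obtain ⟨x, rfl⟩ : ∃ x, b = √k * x := ⟨b / √k, by field_simp⟩
  obtain ⟨y, rfl⟩ : ∃ y, a = √μ * y := ⟨a / √μ, by field_simp⟩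
  have hx : x ^ 2 ≤ S := le_of_mul_le_mul_left (by nlinarith) hk
  have hy : y ^ 2 ≤ t := le_of_mul_le_mul_left (by nlinarith) hμ
  obtain ⟨hp, hr, hc⟩ := larger_root_spec (p := k * (1 + ε ^ 2)) (r := μ) (l := l)
    (q := (ε * √k * √μ) ^ 2) (sq_nonneg _)
    (by rw [hl, mul_pow, mul_pow, hsk, hsμ]; ring_nf)
  calc (√μ * y + ε * (√k * x)) ^ 2 + (√k * x) ^ 2
      = k * (1 + ε ^ 2) * x ^ 2 + 2 * (ε * √k * √μ) * x * y + μ * y ^ 2 := by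
        linear_combination (1 + ε ^ 2) * x ^ 2 * hsk + y ^ 2 * hsμ
    _ ≤ l * (x ^ 2 + y ^ 2) := quadratic_form_le_of_sub_mul_sub_eq_sq hp hr hc x y
    _ ≤ l * (t + S) := mul_le_mul_of_nonneg_left (by linarith) (by linarith)

theorem stmt6_general {n m N : ℕ} (A : Matrix (Fin n) (Fin n) ℝ) (hA : A.PosDef)
    (Z : Matrix (Fin n) (Fin m) ℝ) (hZ : LinearIndependent ℝ Zᵀ)
    (Et : Matrix (Fin m) (Fin m) ℝ)
    (nd : Fin N → ℕ) (R : ∀ i : Fin N, Matrix (Fin (nd i)) (Fin n) ℝ)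
    (k₀ μ : ℝ) (hk₀ : 0 < k₀) (hμ : 0 < μ)
    (hk₀bound : ∀ U : ∀ i : Fin N, Fin (nd i) → ℝ,
      (A *ᵥ (∑ i, (R i)ᵀ *ᵥ U i)) ⬝ᵥ (∑ i, (R i)ᵀ *ᵥ U i)
        ≤ k₀ * ∑ i, (A *ᵥ ((R i)ᵀ *ᵥ U i)) ⬝ᵥ ((R i)ᵀ *ᵥ U i))
    (hEμ : ∀ u : Fin m → ℝ, ((Zᵀ * A * Z) *ᵥ u) ⬝ᵥ u ≤ μ * ((Et *ᵥ u) ⬝ᵥ u))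
    (εA cR : ℝ)
    (hεA : εA = aOpNorm A (Z * (Zᵀ * A * Z)⁻¹ * Zᵀ * A - Z * Et⁻¹ * Zᵀ * A))
    (hcR : cR = (k₀ * (1 + εA ^ 2) + μ
        + Real.sqrt ((k₀ * (1 + εA ^ 2) - μ) ^ 2 + 4 * μ * k₀ * εA ^ 2)) / 2) :
    ∀ (U₀ : Fin m → ℝ) (U : ∀ i : Fin N, Fin (nd i) → ℝ),
      (A *ᵥ (Z *ᵥ U₀ + (1 - Z * Et⁻¹ * Zᵀ * A) *ᵥ (∑ i, (R i)ᵀ *ᵥ U i))) ⬝ᵥ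
          (Z *ᵥ U₀ + (1 - Z * Et⁻¹ * Zᵀ * A) *ᵥ (∑ i, (R i)ᵀ *ᵥ U i))
        ≤ cR * ((Et *ᵥ U₀) ⬝ᵥ U₀ + ∑ i, ((R i * A * (R i)ᵀ) *ᵥ U i) ⬝ᵥ U i) := by
  intro U₀ U
  have ha : aNorm A (Z *ᵥ U₀) ^ 2 ≤ μ * ((Et *ᵥ U₀) ⬝ᵥ U₀) := by
    rw [sq_aNorm hA.posSemidef, ← transpose_mul_mul_mulVec_dotProduct]
    exact hEμ U₀
  have hb : aNorm A (∑ i, (R i)ᵀ *ᵥ U i) ^ 2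
      ≤ k₀ * ∑ i, ((R i * A * (R i)ᵀ) *ᵥ U i) ⬝ᵥ U i := by
    simpa only [sq_aNorm hA.posSemidef, mul_mul_transpose_mulVec_dotProduct] using hk₀bound U
  rw [← sq_aNorm hA.posSemidef]
  exact (sq_aNorm_add_one_sub_inexact_proj_le hA hZ Et⁻¹ U₀ _).trans
    (hεA ▸ sq_add_mul_add_sq_le hk₀ hμ ha hb hcR)

/-- Continuity estimate for the GenEO preconditioner with inexact coarse
solve: under the `k₀`-bound on sums of locally supported vectors and
`⟨E u, u⟩ ≤ μ ⟨Ẽ u, u⟩`, for all `U₀, (U_i)`,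
`‖Z U₀ + (I − P̃₀) ∑ R_iᵀ U_i‖_A² ≤ c_R (⟨Ẽ U₀, U₀⟩ + ∑ ⟨R_i A R_iᵀ U_i, U_i⟩)` where
`c_R = [k₀(1+ε_A²) + μ + √((k₀(1+ε_A²) − μ)² + 4 μ k₀ ε_A²)]/2`, `ε_A = ‖P₀ − P̃₀‖_A`. -/
theorem stmt6 {n m N : ℕ} (A : Matrix (Fin n) (Fin n) ℝ) (hA : A.PosDef)
    (Z : Matrix (Fin n) (Fin m) ℝ) (hZ : LinearIndependent ℝ Zᵀ)
    (Et : Matrix (Fin m) (Fin m) ℝ) (hEt : Et.PosDef)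
    (nd : Fin N → ℕ) (R : ∀ i : Fin N, Matrix (Fin (nd i)) (Fin n) ℝ)
    (k₀ μ : ℝ) (hk₀ : 0 < k₀) (hμ : 0 < μ)
    (hk₀bound : ∀ U : ∀ i : Fin N, Fin (nd i) → ℝ,
      (A *ᵥ (∑ i, (R i)ᵀ *ᵥ U i)) ⬝ᵥ (∑ i, (R i)ᵀ *ᵥ U i)
        ≤ k₀ * ∑ i, (A *ᵥ ((R i)ᵀ *ᵥ U i)) ⬝ᵥ ((R i)ᵀ *ᵥ U i))
    (hEμ : ∀ u : Fin m → ℝ, ((Zᵀ * A * Z) *ᵥ u) ⬝ᵥ u ≤ μ * ((Et *ᵥ u) ⬝ᵥ u))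
    (εA cR : ℝ)
    (hεA : εA = aOpNorm A (Z * (Zᵀ * A * Z)⁻¹ * Zᵀ * A - Z * Et⁻¹ * Zᵀ * A))
    (hcR : cR = (k₀ * (1 + εA ^ 2) + μ
        + Real.sqrt ((k₀ * (1 + εA ^ 2) - μ) ^ 2 + 4 * μ * k₀ * εA ^ 2)) / 2) :
    ∀ (U₀ : Fin m → ℝ) (U : ∀ i : Fin N, Fin (nd i) → ℝ),
      (A *ᵥ (Z *ᵥ U₀ + (1 - Z * Et⁻¹ * Zᵀ * A) *ᵥ (∑ i, (R i)ᵀ *ᵥ U i))) ⬝ᵥ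
          (Z *ᵥ U₀ + (1 - Z * Et⁻¹ * Zᵀ * A) *ᵥ (∑ i, (R i)ᵀ *ᵥ U i))
        ≤ cR * ((Et *ᵥ U₀) ⬝ᵥ U₀ + ∑ i, ((R i * A * (R i)ᵀ) *ᵥ U i) ⬝ᵥ U i) :=
  stmt6_general A hA Z hZ Et nd R k₀ μ hk₀ hμ hk₀bound hEμ εA cR hεA hcR
end

section
/- Let A be a symmetric positive semidefinite and B a symmetric positive definite n×n real matrix. Let (U_k)_{k=1,…,n} be a basis of ℝⁿ with ⟨B U_k, U_l⟩ = 0 for k ≠ l and A U_k = λ_k B U_k for real numbers λ_k. Let τ > 0, V_τ := span{ U_k : λ_k < τ }, let W be any subspace of ℝⁿ, and let p be the B-orthogonal projection onto V_τ + W. Then for all U ∈ ℝⁿ: τ ⟨B (I − p) U, (I − p) U⟩ ≤ ⟨A (I − p) U, (I − p) U⟩. -/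
open Matrix

/-! Expand `w = (1 - p) u` in the generalized eigenbasis, `w = ∑ c_k U_k`. Both quadratic forms
diagonalize: `⟨B w, w⟩ = ∑ c_k² d_k` and `⟨A w, w⟩ = ∑ λ_k c_k² d_k` with `d_k = ⟨B U_k, U_k⟩ ≥ 0`.
Since `w` is `B`-orthogonal to `V_τ + W ⊇ V_τ`, the coefficients `c_k` with `λ_k < τ` vanish,
so only modes with `λ_k ≥ τ` contribute and the bound holds termwise. -/

section GeneralizedEigenbasis

variable {ι κ : Type*} [Fintype ι] [Fintype κ]

theorem dotProduct_sum_smul (v : ι → ℝ) (c : κ → ℝ) (U : κ → ι → ℝ) :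
    v ⬝ᵥ ∑ k, c k • U k = ∑ k, c k * (v ⬝ᵥ U k) := by
  simp only [dotProduct_sum, dotProduct_smul, smul_eq_mul]

theorem mulVec_sum_smul_dotProduct_of_pairwise_orthogonal (B : Matrix ι ι ℝ) (U : κ → ι → ℝ)
    (hBorth : ∀ k l, k ≠ l → (B *ᵥ U k) ⬝ᵥ U l = 0) (c : κ → ℝ) (k : κ) :
    (B *ᵥ ∑ l, c l • U l) ⬝ᵥ U k = c k * ((B *ᵥ U k) ⬝ᵥ U k) := by
  classical
  simp only [mulVec_sum, mulVec_smul, sum_dotProduct, smul_dotProduct, smul_eq_mul]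
  exact Finset.sum_eq_single_of_mem k (Finset.mem_univ k) fun l _ hlk => by
    rw [hBorth l k hlk, mul_zero]

theorem mul_dotProduct_mulVec_le_of_orthogonal_of_lt (A B : Matrix ι ι ℝ) (hB : B.PosSemidef)
    (U : κ → ι → ℝ) (hUspan : Submodule.span ℝ (Set.range U) = ⊤) (lam : κ → ℝ)
    (hBorth : ∀ k l, k ≠ l → (B *ᵥ U k) ⬝ᵥ U l = 0)
    (heig : ∀ k, A *ᵥ U k = lam k • (B *ᵥ U k)) (τ : ℝ) (w : ι → ℝ)
    (horth : ∀ k, lam k < τ → (B *ᵥ w) ⬝ᵥ U k = 0) :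
    τ * ((B *ᵥ w) ⬝ᵥ w) ≤ (A *ᵥ w) ⬝ᵥ w := by
  obtain ⟨c, rfl⟩ := (Submodule.mem_span_range_iff_exists_fun ℝ).mp
    (hUspan ▸ Submodule.mem_top : w ∈ Submodule.span ℝ (Set.range U))
  have hBcoord := mulVec_sum_smul_dotProduct_of_pairwise_orthogonal B U hBorth
  have hAw : A *ᵥ ∑ k, c k • U k = B *ᵥ ∑ k, (c k * lam k) • U k := by
    simp only [mulVec_sum, mulVec_smul, heig, smul_smul]
  rw [hAw, dotProduct_sum_smul, dotProduct_sum_smul, Finset.mul_sum]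
  refine Finset.sum_le_sum fun k _ => ?_
  rw [hBcoord, hBcoord, ← sub_nonneg]
  set d := (B *ᵥ U k) ⬝ᵥ U k
  have hdiff : c k * (c k * lam k * d) - τ * (c k * (c k * d)) = (lam k - τ) * (c k * (c k * d)) := by
    ring
  rw [hdiff]
  rcases lt_or_ge (lam k) τ with hlow | hhigh
  · have hck : c k * d = 0 := (hBcoord c k).symm.trans (horth k hlow)
    rw [hck, mul_zero, mul_zero]
  · have hd : 0 ≤ d := by
      simpa [d, dotProduct_comm] using hB.dotProduct_mulVec_nonneg (U k)
    have hsq : 0 ≤ c k * (c k * d) := by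
      rw [← mul_assoc]; exact mul_nonneg (mul_self_nonneg _) hd
    exact mul_nonneg (sub_nonneg.mpr hhigh) hsq

end GeneralizedEigenbasis

theorem stmt11_general {n : ℕ} (A B : Matrix (Fin n) (Fin n) ℝ)
    (hB : B.PosDef)
    (U : Fin n → (Fin n → ℝ))
    (hUspan : Submodule.span ℝ (Set.range U) = ⊤)
    (lam : Fin n → ℝ)
    (hBorth : ∀ k l, k ≠ l → (B *ᵥ U k) ⬝ᵥ U l = 0)
    (heig : ∀ k, A *ᵥ U k = lam k • (B *ᵥ U k))
    (τ : ℝ)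
    (W : Submodule ℝ (Fin n → ℝ))
    (p : Matrix (Fin n) (Fin n) ℝ)
    (hporth : ∀ u : Fin n → ℝ, ∀ v ∈ Submodule.span ℝ (U '' {k | lam k < τ}) ⊔ W,
      (B *ᵥ (u - p *ᵥ u)) ⬝ᵥ v = 0) :
    ∀ u : Fin n → ℝ,
      τ * ((B *ᵥ ((1 - p) *ᵥ u)) ⬝ᵥ ((1 - p) *ᵥ u))
        ≤ (A *ᵥ ((1 - p) *ᵥ u)) ⬝ᵥ ((1 - p) *ᵥ u) := by
  intro u
  refine mul_dotProduct_mulVec_le_of_orthogonal_of_lt A B hB.posSemidef U hUspan lam hBorth heig τ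
    _ fun k hk => ?_
  rw [sub_mulVec, one_mulVec]
  exact hporth u (U k) (Submodule.mem_sup_left (Submodule.subset_span ⟨k, hk, rfl⟩))

/-- Let `A` be symmetric positive semidefinite, `B` SPD, `(U_k)` a
`B`-orthogonal basis of generalized eigenvectors (`A U_k = λ_k B U_k`), `τ > 0`,
`V_τ := span{U_k : λ_k < τ}`, `W` any subspace, and `p` the `B`-orthogonal projection onto
`V_τ + W`.  Then `τ ⟨B (I − p) U, (I − p) U⟩ ≤ ⟨A (I − p) U, (I − p) U⟩` for all `U`. -/
theorem stmt11 {n : ℕ} (A B : Matrix (Fin n) (Fin n) ℝ)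
    (hA : A.PosSemidef) (hB : B.PosDef)
    (U : Fin n → (Fin n → ℝ))
    (hUindep : LinearIndependent ℝ U)
    (hUspan : Submodule.span ℝ (Set.range U) = ⊤)
    (lam : Fin n → ℝ)
    (hBorth : ∀ k l, k ≠ l → (B *ᵥ U k) ⬝ᵥ U l = 0)
    (heig : ∀ k, A *ᵥ U k = lam k • (B *ᵥ U k))
    (τ : ℝ) (hτ : 0 < τ)
    (W : Submodule ℝ (Fin n → ℝ))
    (p : Matrix (Fin n) (Fin n) ℝ)
    (hpmem : ∀ u : Fin n → ℝ,
      p *ᵥ u ∈ Submodule.span ℝ (U '' {k | lam k < τ}) ⊔ W)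
    (hpid : ∀ v ∈ Submodule.span ℝ (U '' {k | lam k < τ}) ⊔ W, p *ᵥ v = v)
    (hporth : ∀ u : Fin n → ℝ, ∀ v ∈ Submodule.span ℝ (U '' {k | lam k < τ}) ⊔ W,
      (B *ᵥ (u - p *ᵥ u)) ⬝ᵥ v = 0) :
    ∀ u : Fin n → ℝ,
      τ * ((B *ᵥ ((1 - p) *ᵥ u)) ⬝ᵥ ((1 - p) *ᵥ u))
        ≤ (A *ᵥ ((1 - p) *ᵥ u)) ⬝ᵥ ((1 - p) *ᵥ u) :=
  stmt11_general A B hB U hUspan lam hBorth heig τ W p hporth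
end

section
/- Let A be a symmetric positive semidefinite and B a symmetric positive definite n×n real matrix. Let (U_k)_{k=1,…,n} be a basis of ℝⁿ with ⟨B U_k, U_l⟩ = 0 for k ≠ l and A U_k = λ_k B U_k for real numbers λ_k. Let γ > 0, V_γ := span{ U_k : λ_k > γ }, let W be any subspace of ℝⁿ, and let q be the B-orthogonal projection onto V_γ + W. Then for all U ∈ ℝⁿ: ⟨A (I − q) U, (I − q) U⟩ ≤ γ ⟨B (I − q) U, (I − q) U⟩. -/
/-!
Expand `w = (1 - q) u` in the generalized eigenbasis, `w = ∑ c_k U_k`. Because the `U_k` are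
`B`-orthogonal and `A U_k = λ_k B U_k`, both quadratic forms diagonalize:
`⟨A w, w⟩ = ∑ λ_k c_k² ⟨B U_k, U_k⟩` and `⟨B w, w⟩ = ∑ c_k² ⟨B U_k, U_k⟩`. The orthogonality
`B w ⊥ V_γ` kills the terms with `λ_k > γ`, and every remaining term has `λ_k ≤ γ`.
-/

open Matrix

variable {m ι : Type*} [Fintype m] [Fintype ι]

lemma mulVec_sum_smul_dotProduct (M : Matrix m m ℝ) (U : ι → m → ℝ) (c : ι → ℝ) (v : m → ℝ) :
    (M *ᵥ ∑ l, c l • U l) ⬝ᵥ v = ∑ l, c l * ((M *ᵥ U l) ⬝ᵥ v) := by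
  simp only [mulVec_sum, sum_dotProduct, mulVec_smul, smul_dotProduct, smul_eq_mul]

section Orthogonal

variable {M : Matrix m m ℝ} {U : ι → m → ℝ}

lemma mulVec_sum_smul_dotProduct_of_pairwise
    (horth : Pairwise fun k l => (M *ᵥ U k) ⬝ᵥ U l = 0) (c : ι → ℝ) (k : ι) :
    (M *ᵥ ∑ l, c l • U l) ⬝ᵥ U k = c k * ((M *ᵥ U k) ⬝ᵥ U k) := by
  rw [mulVec_sum_smul_dotProduct, Finset.sum_eq_single k
    (fun l _ hlk => by rw [horth hlk, mul_zero]) (by simp)]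

lemma mulVec_sum_smul_dotProduct_sum_smul_of_pairwise
    (horth : Pairwise fun k l => (M *ᵥ U k) ⬝ᵥ U l = 0) (c : ι → ℝ) :
    (M *ᵥ ∑ l, c l • U l) ⬝ᵥ ∑ l, c l • U l = ∑ k, c k ^ 2 * ((M *ᵥ U k) ⬝ᵥ U k) := by
  rw [dotProduct_sum]
  refine Finset.sum_congr rfl fun k _ => ?_
  rw [dotProduct_smul, mulVec_sum_smul_dotProduct_of_pairwise horth, smul_eq_mul]
  ring

end Orthogonal

theorem mulVec_dotProduct_le_of_generalized_eigenbasis {A B : Matrix m m ℝ} (hB : B.PosSemidef)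
    {U : ι → m → ℝ} {lam : ι → ℝ} (hBorth : Pairwise fun k l => (B *ᵥ U k) ⬝ᵥ U l = 0)
    (heig : ∀ k, A *ᵥ U k = lam k • (B *ᵥ U k)) (γ : ℝ) (c : ι → ℝ)
    (hc : ∀ k, γ < lam k → (B *ᵥ ∑ l, c l • U l) ⬝ᵥ U k = 0) :
    (A *ᵥ ∑ l, c l • U l) ⬝ᵥ ∑ l, c l • U l ≤ γ * ((B *ᵥ ∑ l, c l • U l) ⬝ᵥ ∑ l, c l • U l) := by
  have hAorth : Pairwise fun k l => (A *ᵥ U k) ⬝ᵥ U l = 0 := fun k l hkl => by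
    change (A *ᵥ U k) ⬝ᵥ U l = 0
    rw [heig, smul_dotProduct, hBorth hkl, smul_zero]
  rw [mulVec_sum_smul_dotProduct_sum_smul_of_pairwise hAorth,
    mulVec_sum_smul_dotProduct_sum_smul_of_pairwise hBorth, Finset.mul_sum]
  refine Finset.sum_le_sum fun k _ => ?_
  rw [heig, smul_dotProduct, smul_eq_mul]
  by_cases hk : γ < lam k
  · have hck : c k * ((B *ᵥ U k) ⬝ᵥ U k) = 0 := by
      rw [← mulVec_sum_smul_dotProduct_of_pairwise hBorth, hc k hk]
    refine le_of_eq ?_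
    calc c k ^ 2 * (lam k * ((B *ᵥ U k) ⬝ᵥ U k))
        = lam k * c k * (c k * ((B *ᵥ U k) ⬝ᵥ U k)) := by ring
      _ = γ * (c k * (c k * ((B *ᵥ U k) ⬝ᵥ U k))) := by rw [hck]; ring
      _ = γ * (c k ^ 2 * ((B *ᵥ U k) ⬝ᵥ U k)) := by ring
  · have hβ : 0 ≤ (B *ᵥ U k) ⬝ᵥ U k := by
      simpa [dotProduct_comm] using hB.dotProduct_mulVec_nonneg (U k)
    have hle := mul_le_mul_of_nonneg_right (not_lt.mp hk) (mul_nonneg (sq_nonneg (c k)) hβ)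
    linarith

theorem stmt12_general {n : ℕ} (A B : Matrix (Fin n) (Fin n) ℝ)
    (hB : B.PosDef)
    (U : Fin n → (Fin n → ℝ))
    (hUspan : Submodule.span ℝ (Set.range U) = ⊤)
    (lam : Fin n → ℝ)
    (hBorth : ∀ k l, k ≠ l → (B *ᵥ U k) ⬝ᵥ U l = 0)
    (heig : ∀ k, A *ᵥ U k = lam k • (B *ᵥ U k))
    (γ : ℝ)
    (W : Submodule ℝ (Fin n → ℝ))
    (q : Matrix (Fin n) (Fin n) ℝ)
    (hporth : ∀ u : Fin n → ℝ, ∀ v ∈ Submodule.span ℝ (U '' {k | γ < lam k}) ⊔ W,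
      (B *ᵥ (u - q *ᵥ u)) ⬝ᵥ v = 0) :
    ∀ u : Fin n → ℝ,
      (A *ᵥ ((1 - q) *ᵥ u)) ⬝ᵥ ((1 - q) *ᵥ u)
        ≤ γ * ((B *ᵥ ((1 - q) *ᵥ u)) ⬝ᵥ ((1 - q) *ᵥ u)) := by
  intro u
  obtain ⟨c, hc⟩ := (Submodule.mem_span_range_iff_exists_fun ℝ).mp
    (hUspan ▸ Submodule.mem_top : (1 - q) *ᵥ u ∈ Submodule.span ℝ (Set.range U))
  rw [← hc]
  refine mulVec_dotProduct_le_of_generalized_eigenbasis hB.posSemidef hBorth heig γ c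
    fun k hk => ?_
  rw [hc, sub_mulVec, one_mulVec]
  exact hporth u (U k) (Submodule.mem_sup_left (Submodule.subset_span ⟨k, hk, rfl⟩))

/-- Let `A` be symmetric positive semidefinite, `B` SPD, `(U_k)` a
`B`-orthogonal basis of generalized eigenvectors (`A U_k = λ_k B U_k`), `γ > 0`,
`V_γ := span{U_k : λ_k > γ}`, `W` any subspace, and `q` the `B`-orthogonal projection onto
`V_γ + W`.  Then `⟨A (I − q) U, (I − q) U⟩ ≤ γ ⟨B (I − q) U, (I − q) U⟩` for all `U`. -/
theorem stmt12 {n : ℕ} (A B : Matrix (Fin n) (Fin n) ℝ)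
    (hA : A.PosSemidef) (hB : B.PosDef)
    (U : Fin n → (Fin n → ℝ))
    (hUindep : LinearIndependent ℝ U)
    (hUspan : Submodule.span ℝ (Set.range U) = ⊤)
    (lam : Fin n → ℝ)
    (hBorth : ∀ k l, k ≠ l → (B *ᵥ U k) ⬝ᵥ U l = 0)
    (heig : ∀ k, A *ᵥ U k = lam k • (B *ᵥ U k))
    (γ : ℝ) (hγ : 0 < γ)
    (W : Submodule ℝ (Fin n → ℝ))
    (q : Matrix (Fin n) (Fin n) ℝ)
    (hpmem : ∀ u : Fin n → ℝ,
      q *ᵥ u ∈ Submodule.span ℝ (U '' {k | γ < lam k}) ⊔ W)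
    (hpid : ∀ v ∈ Submodule.span ℝ (U '' {k | γ < lam k}) ⊔ W, q *ᵥ v = v)
    (hporth : ∀ u : Fin n → ℝ, ∀ v ∈ Submodule.span ℝ (U '' {k | γ < lam k}) ⊔ W,
      (B *ᵥ (u - q *ᵥ u)) ⬝ᵥ v = 0) :
    ∀ u : Fin n → ℝ,
      (A *ᵥ ((1 - q) *ᵥ u)) ⬝ᵥ ((1 - q) *ᵥ u)
        ≤ γ * ((B *ᵥ ((1 - q) *ᵥ u)) ⬝ᵥ ((1 - q) *ᵥ u)) :=
  stmt12_general A B hB U hUspan lam hBorth heig γ W q hporth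
end

section
/- Let B be a symmetric positive definite n×n real matrix, V ⊆ ℝⁿ a subspace, ξ the B-orthogonal projection onto V, and W the B-orthogonal complement of V (so I − ξ is the B-orthogonal projection onto W). Define B† := (I − ξ) B⁻¹. Then B† maps W into W, and for all y, z ∈ W: ⟨B (B† y), z⟩ = ⟨y, z⟩. In other words, B† restricted to W is the inverse of the operator B_W : W → W defined by the Riesz representation (with respect to the Euclidean inner product on W) of the bilinear form (u,v) ↦ ⟨B u, v⟩ on W × W. -/
/-! `B B† y = y - B ξ B⁻¹ y`, and for `z ∈ W` the symmetry of `B` gives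
`⟨B ξ B⁻¹ y, z⟩ = ⟨B z, ξ B⁻¹ y⟩ = 0` because `ξ B⁻¹ y ∈ V`. That `B† y ∈ W` is just
`B`-orthogonality of `I - ξ`. -/

open Matrix

section

variable {ι R : Type*} [Fintype ι] [CommRing R]

theorem Matrix.IsSymm.mulVec_dotProduct_comm_s13 {B : Matrix ι ι R} (hB : B.IsSymm) (x y : ι → R) :
    (B *ᵥ x) ⬝ᵥ y = (B *ᵥ y) ⬝ᵥ x := by
  rw [dotProduct_comm, dotProduct_mulVec, ← mulVec_transpose, hB.eq]

theorem Matrix.one_sub_mul_mulVec [DecidableEq ι] (ξ C : Matrix ι ι R) (u : ι → R) :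
    ((1 - ξ) * C) *ᵥ u = C *ᵥ u - ξ *ᵥ (C *ᵥ u) := by
  rw [← mulVec_mulVec, sub_mulVec, one_mulVec]

end

theorem stmt13_general {n : ℕ} (B : Matrix (Fin n) (Fin n) ℝ) (hB : B.PosDef)
    (V : Submodule ℝ (Fin n → ℝ))
    (ξ : Matrix (Fin n) (Fin n) ℝ)
    (hξmem : ∀ u : Fin n → ℝ, ξ *ᵥ u ∈ V)
    (hξorth : ∀ u : Fin n → ℝ, ∀ v ∈ V, (B *ᵥ (u - ξ *ᵥ u)) ⬝ᵥ v = 0) :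
    (∀ y : Fin n → ℝ, (∀ v ∈ V, (B *ᵥ y) ⬝ᵥ v = 0) →
        ∀ v ∈ V, (B *ᵥ (((1 - ξ) * B⁻¹) *ᵥ y)) ⬝ᵥ v = 0)
    ∧ (∀ y z : Fin n → ℝ, (∀ v ∈ V, (B *ᵥ y) ⬝ᵥ v = 0) →
        (∀ v ∈ V, (B *ᵥ z) ⬝ᵥ v = 0) →
        (B *ᵥ (((1 - ξ) * B⁻¹) *ᵥ y)) ⬝ᵥ z = y ⬝ᵥ z) := by
  have hsymm : B.IsSymm := hB.isHermitian
  have hdet : IsUnit B.det := (isUnit_iff_isUnit_det B).mp hB.isUnit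
  refine ⟨fun y _ v hv => ?_, fun y z _ hz => ?_⟩
  · rw [one_sub_mul_mulVec]
    exact hξorth _ v hv
  · rw [one_sub_mul_mulVec, mulVec_sub, sub_dotProduct, mulVec_mulVec, mul_nonsing_inv B hdet,
      one_mulVec, hsymm.mulVec_dotProduct_comm_s13 _ z, hz _ (hξmem _), sub_zero]

/-- Let `B` be SPD, `V` a subspace, `ξ` the `B`-orthogonal projection onto
`V`, and `W := {w | ∀ v ∈ V, ⟨B w, v⟩ = 0}` the `B`-orthogonal complement of `V`.
Define `B† := (I − ξ) B⁻¹`.  Then `B†` maps `W` into `W`, and for all `y, z ∈ W`,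
`⟨B (B† y), z⟩ = ⟨y, z⟩`, i.e. `B†` restricted to `W` inverts the operator on `W`
represented by the bilinear form `(u, v) ↦ ⟨B u, v⟩`. -/
theorem stmt13 {n : ℕ} (B : Matrix (Fin n) (Fin n) ℝ) (hB : B.PosDef)
    (V : Submodule ℝ (Fin n → ℝ))
    (ξ : Matrix (Fin n) (Fin n) ℝ)
    (hξmem : ∀ u : Fin n → ℝ, ξ *ᵥ u ∈ V)
    (hξid : ∀ v ∈ V, ξ *ᵥ v = v)
    (hξorth : ∀ u : Fin n → ℝ, ∀ v ∈ V, (B *ᵥ (u - ξ *ᵥ u)) ⬝ᵥ v = 0) :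
    (∀ y : Fin n → ℝ, (∀ v ∈ V, (B *ᵥ y) ⬝ᵥ v = 0) →
        ∀ v ∈ V, (B *ᵥ (((1 - ξ) * B⁻¹) *ᵥ y)) ⬝ᵥ v = 0)
    ∧ (∀ y z : Fin n → ℝ, (∀ v ∈ V, (B *ᵥ y) ⬝ᵥ v = 0) →
        (∀ v ∈ V, (B *ᵥ z) ⬝ᵥ v = 0) →
        (B *ᵥ (((1 - ξ) * B⁻¹) *ᵥ y)) ⬝ᵥ z = y ⬝ᵥ z) :=
  stmt13_general B hB V ξ hξmem hξorth
end
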